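/- Let ρ, ρ', σ be states on a quantum system of Hilbert space dimension k such that σ ≥ (ε/k)·I (i.e. the smallest eigenvalue of σ is at least ε/k), and let M be a POVM with measurement map M such that ||M(ρ) − M(ρ')||_1 ≤ ε ≤ 1/e. Then |D(M(ρ)||M(σ)) − D(M(ρ')||M(σ))| ≤ 2ε log(3k/ε). -/

import Mathlib

open Matrix Filter
open scoped Kronecker ENNReal Classical ComplexOrder

noncomputable section

namespace QIT

/-- A (finite-dimensional) quantum state: positive semidefinite with unit trace. -/
def IsState {d : Type} [Fintype d] (ρ : Matrix d d ℂ) : Prop :=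
  ρ.PosSemidef ∧ ρ.trace = 1

/-- Partial trace over the first tensor factor. -/
def ptrFst {X Y : Type} [Fintype X] (M : Matrix (X × Y) (X × Y) ℂ) : Matrix Y Y ℂ :=
  Matrix.of fun b b' => ∑ a, M (a, b) (a, b')

/-- Partial trace over the second tensor factor. -/
def ptrSnd {X Y : Type} [Fintype Y] (M : Matrix (X × Y) (X × Y) ℂ) : Matrix X X ℂ :=
  Matrix.of fun a a' => ∑ b, M (a, b) (a', b)

/-- For a tripartite state on (A ⊗ B) ⊗ E, trace out the middle factor B, giving A ⊗ E. -/
def ptrMid {X Y Z : Type} [Fintype Y] (M : Matrix ((X × Y) × Z) ((X × Y) × Z) ℂ) :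
    Matrix (X × Z) (X × Z) ℂ :=
  Matrix.of fun p q => ∑ b, M ((p.1, b), p.2) ((q.1, b), q.2)

/-- For a tripartite state on (A ⊗ B) ⊗ E, trace out the leftmost factor A, giving B ⊗ E. -/
def ptrLeft {X Y Z : Type} [Fintype X] (M : Matrix ((X × Y) × Z) ((X × Y) × Z) ℂ) :
    Matrix (Y × Z) (Y × Z) ℂ :=
  Matrix.of fun p q => ∑ a, M ((a, p.1), p.2) ((a, q.1), q.2)

/-- Separable states on a bipartite system. -/
def IsSeparable {X Y : Type} [Fintype X] [Fintype Y]
    (σ : Matrix (X × Y) (X × Y) ℂ) : Prop :=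
  ∃ (n : ℕ) (p : Fin n → ℝ) (ρ1 : Fin n → Matrix X X ℂ) (ρ2 : Fin n → Matrix Y Y ℂ),
    (∀ i, 0 ≤ p i) ∧ (∑ i, p i) = 1 ∧ (∀ i, IsState (ρ1 i)) ∧ (∀ i, IsState (ρ2 i)) ∧
    σ = ∑ i, (p i : ℂ) • (ρ1 i ⊗ₖ ρ2 i)

/-- Matrix logarithm (base 2) of a Hermitian matrix via the spectral decomposition,
with the convention log 0 = 0 on the kernel; junk value 0 on non-Hermitian input. -/
def matLogb {d : Type} [Fintype d] [DecidableEq d] (A : Matrix d d ℂ) : Matrix d d ℂ :=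
  if h : A.IsHermitian then
    (h.eigenvectorUnitary : Matrix d d ℂ) *
      Matrix.diagonal (fun i => ((Real.logb 2 (h.eigenvalues i) : ℝ) : ℂ)) *
      star (h.eigenvectorUnitary : Matrix d d ℂ)
  else 0

/-- Quantum relative entropy (base 2), +∞ if the support condition fails.  (For positive
semidefinite `σ`, the condition `∀ v, σ v = 0 → ρ v = 0` on kernels is equivalent to
supp ρ ⊆ supp σ.) -/
def qRelEnt {d : Type} [Fintype d] [DecidableEq d] (ρ σ : Matrix d d ℂ) : ℝ≥0∞ :=
  if ∀ v : d → ℂ, σ.mulVec v = 0 → ρ.mulVec v = 0 then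
    ENNReal.ofReal ((ρ * (matLogb ρ - matLogb σ)).trace.re)
  else ⊤

/-- Relative entropy of entanglement. -/
def Er {X Y : Type} [Fintype X] [DecidableEq X] [Fintype Y] [DecidableEq Y]
    (ρ : Matrix (X × Y) (X × Y) ℂ) : ℝ≥0∞ :=
  ⨅ (σ : Matrix (X × Y) (X × Y) ℂ) (_ : IsSeparable σ), qRelEnt ρ σ

/-- n-fold tensor power of a bipartite state, arranged as a state on Aⁿ ⊗ Bⁿ. -/
def tpow {X Y : Type} (ρ : Matrix (X × Y) (X × Y) ℂ) (n : ℕ) :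
    Matrix ((Fin n → X) × (Fin n → Y)) ((Fin n → X) × (Fin n → Y)) ℂ :=
  Matrix.of fun x y => ∏ i, ρ (x.1 i, x.2 i) (y.1 i, y.2 i)

/-- n-fold tensor power of a tripartite state on (A⊗B)⊗E, arranged on (Aⁿ⊗Bⁿ)⊗Eⁿ. -/
def tpow3 {X Y Z : Type} (ρ : Matrix ((X × Y) × Z) ((X × Y) × Z) ℂ) (n : ℕ) :
    Matrix (((Fin n → X) × (Fin n → Y)) × (Fin n → Z))
           (((Fin n → X) × (Fin n → Y)) × (Fin n → Z)) ℂ :=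
  Matrix.of fun u v => ∏ i, ρ ((u.1.1 i, u.1.2 i), u.2 i) ((v.1.1 i, v.1.2 i), v.2 i)

/-- Regularized relative entropy of entanglement. -/
def ErReg {X Y : Type} [Fintype X] [DecidableEq X] [Fintype Y] [DecidableEq Y]
    (ρ : Matrix (X × Y) (X × Y) ℂ) : ℝ≥0∞ :=
  Filter.limsup (fun n : ℕ => Er (tpow ρ n) / (n : ℝ≥0∞)) Filter.atTop

/-- Classical relative entropy (base 2) of two finitely supported "probability vectors". -/
def klDiv2 {X : Type} [Fintype X] (P Q : X → ℝ) : ℝ≥0∞ :=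
  if ∀ x, Q x = 0 → P x = 0 then
    ENNReal.ofReal (∑ x, P x * Real.logb 2 (P x / Q x))
  else ⊤

/-- Outcome distribution of a POVM on a state. -/
def mProb {d X : Type} [Fintype d] (M : X → Matrix d d ℂ) (ρ : Matrix d d ℂ) : X → ℝ :=
  fun x => ((ρ * M x).trace).re

/-- POVM condition. -/
def IsPOVM {d X : Type} [Fintype d] [DecidableEq d] [Fintype X]
    (M : X → Matrix d d ℂ) : Prop :=
  (∀ x, (M x).PosSemidef) ∧ (∑ x, M x) = 1

/-- Conditions for a one-way (A→B) LOCC measurement with POVM elements R_k ⊗ S_{k,ℓ}. -/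
def OneLOCCData {X Y : Type} [Fintype X] [DecidableEq X] [Fintype Y] [DecidableEq Y]
    {k l : ℕ} (R : Fin k → Matrix X X ℂ) (S : Fin k → Fin l → Matrix Y Y ℂ) : Prop :=
  (∀ i, (R i).PosSemidef) ∧ (∑ i, R i) = 1 ∧
    (∀ i j, (S i j).PosSemidef) ∧ (∀ i, (∑ j, S i j) = 1)

/-- The POVM of a one-way LOCC measurement. -/
def oneLOCCPOVM {X Y : Type} {k l : ℕ} (R : Fin k → Matrix X X ℂ)
    (S : Fin k → Fin l → Matrix Y Y ℂ) : Fin k × Fin l → Matrix (X × Y) (X × Y) ℂ :=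
  fun p => R p.1 ⊗ₖ S p.1 p.2

/-- One-way-LOCC restricted relative entropy of entanglement E_{r,1-LOCC}. -/
def ErOneLOCC {X Y : Type} [Fintype X] [DecidableEq X] [Fintype Y] [DecidableEq Y]
    (ρ : Matrix (X × Y) (X × Y) ℂ) : ℝ≥0∞ :=
  ⨅ (σ : Matrix (X × Y) (X × Y) ℂ) (_ : IsSeparable σ),
    ⨆ (k : ℕ) (l : ℕ) (R : Fin k → Matrix X X ℂ) (S : Fin k → Fin l → Matrix Y Y ℂ)
      (_ : OneLOCCData R S),
      klDiv2 (mProb (oneLOCCPOVM R S) ρ) (mProb (oneLOCCPOVM R S) σ)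

/-- Regularized E_{r,1-LOCC}. -/
def ErOneLOCCReg {X Y : Type} [Fintype X] [DecidableEq X] [Fintype Y] [DecidableEq Y]
    (ρ : Matrix (X × Y) (X × Y) ℂ) : ℝ≥0∞ :=
  Filter.limsup (fun n : ℕ => ErOneLOCC (tpow ρ n) / (n : ℝ≥0∞)) Filter.atTop

/-- LO (product) restricted relative entropy of entanglement E_{r,LO}. -/
def ErLO {X Y : Type} [Fintype X] [DecidableEq X] [Fintype Y] [DecidableEq Y]
    (ρ : Matrix (X × Y) (X × Y) ℂ) : ℝ≥0∞ :=
  ⨅ (σ : Matrix (X × Y) (X × Y) ℂ) (_ : IsSeparable σ),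
    ⨆ (k : ℕ) (l : ℕ) (R : Fin k → Matrix X X ℂ) (S : Fin l → Matrix Y Y ℂ)
      (_ : (∀ i, (R i).PosSemidef) ∧ (∑ i, R i) = 1 ∧
            (∀ j, (S j).PosSemidef) ∧ (∑ j, S j) = 1),
      klDiv2 (mProb (fun p : Fin k × Fin l => R p.1 ⊗ₖ S p.2) ρ)
             (mProb (fun p : Fin k × Fin l => R p.1 ⊗ₖ S p.2) σ)

def ErLOReg {X Y : Type} [Fintype X] [DecidableEq X] [Fintype Y] [DecidableEq Y]
    (ρ : Matrix (X × Y) (X × Y) ℂ) : ℝ≥0∞ :=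
  Filter.limsup (fun n : ℕ => ErLO (tpow ρ n) / (n : ℝ≥0∞)) Filter.atTop

/-- Families of pairs of local Kraus-operator products realizable by a finite-round
LOCC protocol (with two-way classical communication) on a bipartite system. -/
inductive LOCCFam (dA dB : Type) [Fintype dA] [DecidableEq dA] [Fintype dB] [DecidableEq dB] :
    (dA' dB' X : Type) → (X → Matrix dA' dA ℂ) → (X → Matrix dB' dB ℂ) → Prop
  | base : LOCCFam dA dB dA dB PUnit (fun _ => 1) (fun _ => 1)
  | stepA {dA' dB' X : Type} {a : X → Matrix dA' dA ℂ} {b : X → Matrix dB' dB ℂ}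
      (h : LOCCFam dA dB dA' dB' X a b)
      {dA'' K : Type} [Fintype dA'] [DecidableEq dA'] [Fintype dA''] [Fintype K]
      (κ : X → K → Matrix dA'' dA' ℂ)
      (hκ : ∀ x, (∑ j, (κ x j)ᴴ * κ x j) = (1 : Matrix dA' dA' ℂ)) :
      LOCCFam dA dB dA'' dB' (X × K) (fun p => κ p.1 p.2 * a p.1) (fun p => b p.1)
  | stepB {dA' dB' X : Type} {a : X → Matrix dA' dA ℂ} {b : X → Matrix dB' dB ℂ}
      (h : LOCCFam dA dB dA' dB' X a b)
      {dB'' K : Type} [Fintype dB'] [DecidableEq dB'] [Fintype dB''] [Fintype K]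
      (κ : X → K → Matrix dB'' dB' ℂ)
      (hκ : ∀ x, (∑ j, (κ x j)ᴴ * κ x j) = (1 : Matrix dB' dB' ℂ)) :
      LOCCFam dA dB dA' dB'' (X × K) (fun p => a p.1) (fun p => κ p.1 p.2 * b p.1)
  | relabel {dA' dB' X : Type} {a : X → Matrix dA' dA ℂ} {b : X → Matrix dB' dB ℂ}
      (h : LOCCFam dA dB dA' dB' X a b) {Y : Type} (e : Y ≃ X) :
      LOCCFam dA dB dA' dB' Y (fun y => a (e y)) (fun y => b (e y))

/-- A POVM implementable by (two-way) LOCC: outcomes are coarse-grainings of the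
histories of an LOCC protocol, with POVM elements (aᴴa) ⊗ (bᴴb). -/
def IsLOCCPOVM {X Y : Type} [Fintype X] [DecidableEq X] [Fintype Y] [DecidableEq Y]
    {m : ℕ} (M : Fin m → Matrix (X × Y) (X × Y) ℂ) : Prop :=
  ∃ (p q n : ℕ) (a : Fin n → Matrix (Fin p) X ℂ) (b : Fin n → Matrix (Fin q) Y ℂ)
    (g : Fin n → Fin m),
    LOCCFam X Y (Fin p) (Fin q) (Fin n) a b ∧
    ∀ y, M y = ∑ x ∈ Finset.univ.filter (fun x => g x = y),
                  ((a x)ᴴ * a x) ⊗ₖ ((b x)ᴴ * b x)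

/-- LOCC restricted relative entropy of entanglement E_{r,LOCC}. -/
def ErLOCC {X Y : Type} [Fintype X] [DecidableEq X] [Fintype Y] [DecidableEq Y]
    (ρ : Matrix (X × Y) (X × Y) ℂ) : ℝ≥0∞ :=
  ⨅ (σ : Matrix (X × Y) (X × Y) ℂ) (_ : IsSeparable σ),
    ⨆ (m : ℕ) (M : Fin m → Matrix (X × Y) (X × Y) ℂ) (_ : IsLOCCPOVM M),
      klDiv2 (mProb M ρ) (mProb M σ)

def ErLOCCReg {X Y : Type} [Fintype X] [DecidableEq X] [Fintype Y] [DecidableEq Y]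
    (ρ : Matrix (X × Y) (X × Y) ℂ) : ℝ≥0∞ :=
  Filter.limsup (fun n : ℕ => ErLOCC (tpow ρ n) / (n : ℝ≥0∞)) Filter.atTop

/-- Separable (positive) operator. -/
def IsSepOp {X Y : Type} [Fintype X] [Fintype Y] (Q : Matrix (X × Y) (X × Y) ℂ) : Prop :=
  ∃ (n : ℕ) (a : Fin n → Matrix X X ℂ) (b : Fin n → Matrix Y Y ℂ),
    (∀ i, (a i).PosSemidef) ∧ (∀ i, (b i).PosSemidef) ∧ Q = ∑ i, a i ⊗ₖ b i

/-- SEP restricted relative entropy of entanglement E_{r,SEP}. -/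
def ErSEP {X Y : Type} [Fintype X] [DecidableEq X] [Fintype Y] [DecidableEq Y]
    (ρ : Matrix (X × Y) (X × Y) ℂ) : ℝ≥0∞ :=
  ⨅ (σ : Matrix (X × Y) (X × Y) ℂ) (_ : IsSeparable σ),
    ⨆ (m : ℕ) (M : Fin m → Matrix (X × Y) (X × Y) ℂ)
      (_ : IsPOVM M ∧ ∀ x, IsSepOp (M x)),
      klDiv2 (mProb M ρ) (mProb M σ)

def ErSEPReg {X Y : Type} [Fintype X] [DecidableEq X] [Fintype Y] [DecidableEq Y]
    (ρ : Matrix (X × Y) (X × Y) ℂ) : ℝ≥0∞ :=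
  Filter.limsup (fun n : ℕ => ErSEP (tpow ρ n) / (n : ℝ≥0∞)) Filter.atTop

/-- Partial transpose on the first factor. -/
def ptranspose {X Y : Type} (Q : Matrix (X × Y) (X × Y) ℂ) : Matrix (X × Y) (X × Y) ℂ :=
  Matrix.of fun p q => Q (q.1, p.2) (p.1, q.2)

/-- PPT restricted relative entropy of entanglement E_{r,PPT}. -/
def ErPPT {X Y : Type} [Fintype X] [DecidableEq X] [Fintype Y] [DecidableEq Y]
    (ρ : Matrix (X × Y) (X × Y) ℂ) : ℝ≥0∞ :=
  ⨅ (σ : Matrix (X × Y) (X × Y) ℂ) (_ : IsSeparable σ),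
    ⨆ (m : ℕ) (M : Fin m → Matrix (X × Y) (X × Y) ℂ)
      (_ : IsPOVM M ∧ ∀ x, (ptranspose (M x)).PosSemidef),
      klDiv2 (mProb M ρ) (mProb M σ)

def ErPPTReg {X Y : Type} [Fintype X] [DecidableEq X] [Fintype Y] [DecidableEq Y]
    (ρ : Matrix (X × Y) (X × Y) ℂ) : ℝ≥0∞ :=
  Filter.limsup (fun n : ℕ => ErPPT (tpow ρ n) / (n : ℝ≥0∞)) Filter.atTop

/-- Von Neumann entropy (base 2), via eigenvalues; junk value 0 on non-Hermitian input. -/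
def vnEntropy {d : Type} [Fintype d] [DecidableEq d] (ρ : Matrix d d ℂ) : ℝ :=
  if h : ρ.IsHermitian then -∑ i, h.eigenvalues i * Real.logb 2 (h.eigenvalues i) else 0

/-- Quantum conditional mutual information I(A;B|E) of a state on (A⊗B)⊗E. -/
def qcmi {X Y Z : Type} [Fintype X] [DecidableEq X] [Fintype Y] [DecidableEq Y]
    [Fintype Z] [DecidableEq Z] (ρ : Matrix ((X × Y) × Z) ((X × Y) × Z) ℂ) : ℝ :=
  vnEntropy (ptrMid ρ) + vnEntropy (ptrLeft ρ) - vnEntropy ρ - vnEntropy (ptrFst ρ)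

/-- Squashed entanglement (infimum over finite-dimensional extensions). -/
def Esq {X Y : Type} [Fintype X] [DecidableEq X] [Fintype Y] [DecidableEq Y]
    (ρ : Matrix (X × Y) (X × Y) ℂ) : ℝ≥0∞ :=
  ⨅ (e : ℕ) (ω : Matrix ((X × Y) × Fin e) ((X × Y) × Fin e) ℂ)
    (_ : IsState ω ∧ ptrSnd ω = ρ),
    ENNReal.ofReal (qcmi ω / 2)

/-- The classical extension Σ_i p_i ρ_i ⊗ |i⟩⟨i| of an ensemble. -/
def classExt {X Y : Type} {m : ℕ} (p : Fin m → ℝ)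
    (ρi : Fin m → Matrix (X × Y) (X × Y) ℂ) :
    Matrix ((X × Y) × Fin m) ((X × Y) × Fin m) ℂ :=
  Matrix.of fun u v => if u.2 = v.2 then (p u.2 : ℂ) * ρi u.2 u.1 v.1 else 0

/-- c-squashed entanglement (infimum over classical extensions). -/
def Esqc {X Y : Type} [Fintype X] [DecidableEq X] [Fintype Y] [DecidableEq Y]
    (ρ : Matrix (X × Y) (X × Y) ℂ) : ℝ≥0∞ :=
  ⨅ (m : ℕ) (p : Fin m → ℝ) (ρi : Fin m → Matrix (X × Y) (X × Y) ℂ)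
    (_ : (∀ i, 0 ≤ p i) ∧ (∑ i, p i) = 1 ∧ (∀ i, IsState (ρi i)) ∧
          (∑ i, (p i : ℂ) • ρi i) = ρ),
    ENNReal.ofReal (qcmi (classExt p ρi) / 2)

def EsqcReg {X Y : Type} [Fintype X] [DecidableEq X] [Fintype Y] [DecidableEq Y]
    (ρ : Matrix (X × Y) (X × Y) ℂ) : ℝ≥0∞ :=
  Filter.limsup (fun n : ℕ => Esqc (tpow ρ n) / (n : ℝ≥0∞)) Filter.atTop

/-- Mutual information I(X;Y) of a bipartite state. -/
def mutInfo {X Y : Type} [Fintype X] [DecidableEq X] [Fintype Y] [DecidableEq Y]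
    (ρ : Matrix (X × Y) (X × Y) ℂ) : ℝ :=
  vnEntropy (ptrSnd ρ) + vnEntropy (ptrFst ρ) - vnEntropy ρ

/-- Marginal on A⊗B of a state on (A⊗A')⊗(B⊗B'). -/
def margMain {X Y : Type} {a b : ℕ}
    (ω : Matrix ((X × Fin a) × (Y × Fin b)) ((X × Fin a) × (Y × Fin b)) ℂ) :
    Matrix (X × Y) (X × Y) ℂ :=
  Matrix.of fun p q => ∑ i, ∑ j, ω ((p.1, i), (p.2, j)) ((q.1, i), (q.2, j))

/-- Marginal on A'⊗B' of a state on (A⊗A')⊗(B⊗B'). -/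
def margAux {X Y : Type} [Fintype X] [Fintype Y] {a b : ℕ}
    (ω : Matrix ((X × Fin a) × (Y × Fin b)) ((X × Fin a) × (Y × Fin b)) ℂ) :
    Matrix (Fin a × Fin b) (Fin a × Fin b) ℂ :=
  Matrix.of fun p q => ∑ x, ∑ y, ω ((x, p.1), (y, p.2)) ((x, q.1), (y, q.2))

/-- Conditional entanglement of mutual information. -/
def EI {X Y : Type} [Fintype X] [DecidableEq X] [Fintype Y] [DecidableEq Y]
    (ρ : Matrix (X × Y) (X × Y) ℂ) : ℝ≥0∞ :=
  ⨅ (a : ℕ) (b : ℕ)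
    (ω : Matrix ((X × Fin a) × (Y × Fin b)) ((X × Fin a) × (Y × Fin b)) ℂ)
    (_ : IsState ω ∧ margMain ω = ρ),
    ENNReal.ofReal ((mutInfo ω - mutInfo (margAux ω)) / 2)

/-- An LOCC quantum channel between bipartite systems. -/
def IsLOCCChannel {X Y X' Y' : Type} [Fintype X] [DecidableEq X] [Fintype Y] [DecidableEq Y]
    [Fintype X'] [Fintype Y']
    (Λ : Matrix (X × Y) (X × Y) ℂ → Matrix (X' × Y') (X' × Y') ℂ) : Prop :=
  ∃ (n : ℕ) (a : Fin n → Matrix X' X ℂ) (b : Fin n → Matrix Y' Y ℂ),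
    LOCCFam X Y X' Y' (Fin n) a b ∧
    ∀ ω, Λ ω = ∑ x, (a x ⊗ₖ b x) * ω * (a x ⊗ₖ b x)ᴴ

/-- E_{r,→}: the LOCC-processed one-way LOCC relative entropy of entanglement. -/
def ErArrow {X Y : Type} [Fintype X] [DecidableEq X] [Fintype Y] [DecidableEq Y]
    (ρ : Matrix (X × Y) (X × Y) ℂ) : ℝ≥0∞ :=
  ⨆ (p : ℕ) (q : ℕ)
    (Λ : Matrix (X × Y) (X × Y) ℂ → Matrix (Fin p × Fin q) (Fin p × Fin q) ℂ)
    (_ : IsLOCCChannel Λ),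
    ErOneLOCC (Λ ρ)

def ErArrowReg {X Y : Type} [Fintype X] [DecidableEq X] [Fintype Y] [DecidableEq Y]
    (ρ : Matrix (X × Y) (X × Y) ℂ) : ℝ≥0∞ :=
  Filter.limsup (fun n : ℕ => ErArrow (tpow ρ n) / (n : ℝ≥0∞)) Filter.atTop

/-- Trace norm of a Hermitian matrix (junk value 0 on non-Hermitian input). -/
def traceNorm {d : Type} [Fintype d] [DecidableEq d] (M : Matrix d d ℂ) : ℝ :=
  if h : M.IsHermitian then ∑ i, |h.eigenvalues i| else 0

/-- The rank-d maximally entangled state Φ_d. -/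
def MES (d : ℕ) : Matrix (Fin d × Fin d) (Fin d × Fin d) ℂ :=
  Matrix.of fun p q => if p.1 = p.2 ∧ q.1 = q.2 then ((d : ℂ))⁻¹ else 0

/-- Distillable entanglement. -/
def Ed {X Y : Type} [Fintype X] [DecidableEq X] [Fintype Y] [DecidableEq Y]
    (ρ : Matrix (X × Y) (X × Y) ℂ) : ℝ≥0∞ :=
  ⨆ (dseq : ℕ → ℕ)
    (Λ : ∀ n : ℕ, Matrix ((Fin n → X) × (Fin n → Y)) ((Fin n → X) × (Fin n → Y)) ℂ →
          Matrix (Fin (dseq n) × Fin (dseq n)) (Fin (dseq n) × Fin (dseq n)) ℂ)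
    (_ : (∀ n, IsLOCCChannel (Λ n)) ∧
         Filter.Tendsto (fun n => traceNorm (Λ n (tpow ρ n) - MES (dseq n)))
           Filter.atTop (nhds 0)),
    Filter.liminf (fun n : ℕ => ENNReal.ofReal (Real.logb 2 (dseq n)) / (n : ℝ≥0∞))
      Filter.atTop

/-- A one-way LOCC (A→B) quantum instrument with classical output `Fin m` and quantum
output on B: Alice applies an instrument with outcomes k and Kraus operators A k i,
communicates k; Bob applies an instrument with classical outcome x and Kraus B k x j. -/
structure OneLOCCInstr (X Y : Type) [Fintype X] [DecidableEq X] [Fintype Y] [DecidableEq Y]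
    (m : ℕ) where
  nK : ℕ
  nI : ℕ
  nJ : ℕ
  A : Fin nK → Fin nI → Matrix X X ℂ
  B : Fin nK → Fin m → Fin nJ → Matrix Y Y ℂ
  hA : (∑ k, ∑ i, (A k i)ᴴ * A k i) = 1
  hB : ∀ k, (∑ x, ∑ j, (B k x j)ᴴ * B k x j) = 1

/-- The x-component of the instrument applied to a state of AB together with an
untouched environment E. -/
def OneLOCCInstr.comp {X Y Z : Type} [Fintype X] [DecidableEq X] [Fintype Y] [DecidableEq Y]
    [Fintype Z] [DecidableEq Z] {m : ℕ} (T : OneLOCCInstr X Y m) (x : Fin m)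
    (ω : Matrix ((X × Y) × Z) ((X × Y) × Z) ℂ) : Matrix (Y × Z) (Y × Z) ℂ :=
  ∑ k, ∑ i, ∑ j,
    ptrLeft (((T.A k i ⊗ₖ T.B k x j) ⊗ₖ (1 : Matrix Z Z ℂ)) * ω *
             ((T.A k i ⊗ₖ T.B k x j) ⊗ₖ (1 : Matrix Z Z ℂ))ᴴ)

/-- The classical output distribution T^c of the instrument on a state of AB. -/
def OneLOCCInstr.cOut {X Y : Type} [Fintype X] [DecidableEq X] [Fintype Y] [DecidableEq Y]
    {m : ℕ} (T : OneLOCCInstr X Y m) (ω : Matrix (X × Y) (X × Y) ℂ) : Fin m → ℝ :=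
  fun x => (∑ k, ∑ i, ∑ j,
    ((T.A k i ⊗ₖ T.B k x j) * ω * (T.A k i ⊗ₖ T.B k x j)ᴴ).trace).re

/-- The quantum output T^q ⊗ id_E of the instrument on a state of (A⊗B)⊗E. -/
def OneLOCCInstr.qOut {X Y Z : Type} [Fintype X] [DecidableEq X] [Fintype Y] [DecidableEq Y]
    [Fintype Z] [DecidableEq Z] {m : ℕ} (T : OneLOCCInstr X Y m)
    (ω : Matrix ((X × Y) × Z) ((X × Y) × Z) ℂ) : Matrix (Y × Z) (Y × Z) ℂ :=
  ∑ x, T.comp x ω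

/-- The maximally mixed state. -/
def maxMixed (d : Type) [Fintype d] [DecidableEq d] : Matrix d d ℂ :=
  ((Fintype.card d : ℂ))⁻¹ • (1 : Matrix d d ℂ)

/-- Relative entropy of "entanglement" w.r.t. a set of states G and a set of
measurements Ms (measurements encoded as pairs of an outcome count and a POVM). -/
def ErG {d : Type} [Fintype d] [DecidableEq d]
    (G : Set (Matrix d d ℂ)) (Ms : Set (Σ m : ℕ, Fin m → Matrix d d ℂ))
    (ρ : Matrix d d ℂ) : ℝ≥0∞ :=
  ⨅ (σ : Matrix d d ℂ) (_ : σ ∈ G),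
    ⨆ (M : Σ m : ℕ, Fin m → Matrix d d ℂ) (_ : M ∈ Ms),
      klDiv2 (mProb M.2 ρ) (mProb M.2 σ)

/-- The distinguishability (pseudo-)norm ‖ρ−ρ'‖_Ms induced by a set of measurements. -/
def distMeas {d : Type} [Fintype d] [DecidableEq d]
    (Ms : Set (Σ m : ℕ, Fin m → Matrix d d ℂ)) (ρ ρ' : Matrix d d ℂ) : ℝ :=
  ⨆ (M : Σ m : ℕ, Fin m → Matrix d d ℂ) (_ : M ∈ Ms),
    ∑ x, |mProb M.2 ρ x - mProb M.2 ρ' x|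

/-- One-way LOCC distinguishability norm ‖ρ−ρ'‖_{1-LOCC}. -/
def oneLOCCDist {X Y : Type} [Fintype X] [DecidableEq X] [Fintype Y] [DecidableEq Y]
    (ρ ρ' : Matrix (X × Y) (X × Y) ℂ) : ℝ :=
  ⨆ (k : ℕ) (l : ℕ) (R : Fin k → Matrix X X ℂ) (S : Fin k → Fin l → Matrix Y Y ℂ)
    (_ : OneLOCCData R S),
    ∑ p, |mProb (oneLOCCPOVM R S) ρ p - mProb (oneLOCCPOVM R S) ρ' p|

/-- Reindexing a tripartite system (A⊗B)⊗E into the bipartite split B : (A⊗E). -/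
def splitBAE {X Y Z : Type} : (X × Y) × Z ≃ Y × (X × Z) where
  toFun := fun u => (u.1.2, (u.1.1, u.2))
  invFun := fun u => ((u.2.1, u.1), u.2.2)
  left_inv := fun _ => rfl
  right_inv := fun _ => rfl

/-- A tripartite state regarded as a bipartite state across B : AE. -/
def asBAE {X Y Z : Type} (ρ : Matrix ((X × Y) × Z) ((X × Y) × Z) ℂ) :
    Matrix (Y × (X × Z)) (Y × (X × Z)) ℂ :=
  Matrix.reindex splitBAE splitBAE ρ

end QIT

open QIT

variable {dA dB dE : Type} [Fintype dA] [DecidableEq dA] [Fintype dB] [DecidableEq dB]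
  [Fintype dE] [DecidableEq dE]

/-! Since `ρ ≤ 1` and `σ ≥ (ε/k)·1`, the outcome distributions `P = M(ρ)`, `P' = M(ρ')`,
`Q = M(σ)` satisfy `(ε/k)·P ≤ Q` and `(ε/k)·P' ≤ Q` pointwise. Outcome by outcome,
`p log(p/q) - p' log(p'/q)` is at most `(p - p')(1 + log(k/ε))` when `p' ≤ p`, because then
`p/q ≤ k/ε`; when `p < p'` it is at most
`(p' - p) log(q/(p' - p)) ≤ ε q + (p' - p)(log(1/ε) - 1)`, by `log x ≤ x - 1` at
`x = ε q/(p' - p)`. Both coefficients are nonnegative for `ε ≤ 1/e`, so summing against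
`∑ |P - P'| ≤ ε` and `∑ Q = 1` gives `ε (1 + log k + 2 log(1/ε))`, which is at most
`2 ε log(3k/ε)`. -/

open scoped MatrixOrder

namespace Matrix

variable {n 𝕜 : Type*} [Fintype n] [RCLike 𝕜]

theorem PosSemidef.trace_mul_nonneg {A B : Matrix n n 𝕜} (hA : A.PosSemidef)
    (hB : B.PosSemidef) : 0 ≤ (A * B).trace := by
  obtain ⟨C, rfl⟩ := CStarAlgebra.nonneg_iff_eq_star_mul_self.mp hA.nonneg
  rw [star_eq_conjTranspose, Matrix.mul_assoc, trace_mul_comm]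
  exact (hB.mul_mul_conjTranspose_same C).trace_nonneg

theorem trace_mul_le_trace_mul_of_le {A B M : Matrix n n 𝕜} (hAB : A ≤ B)
    (hM : M.PosSemidef) : (A * M).trace ≤ (B * M).trace := by
  have := PosSemidef.trace_mul_nonneg hAB hM
  rwa [Matrix.sub_mul, trace_sub, sub_nonneg] at this

theorem PosSemidef.eigenvalues_le_re_trace [DecidableEq n] {A : Matrix n n 𝕜}
    (hA : A.PosSemidef) (i : n) : hA.1.eigenvalues i ≤ RCLike.re A.trace := by
  rw [hA.1.trace_eq_sum_eigenvalues, map_sum]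
  simp only [RCLike.ofReal_re]
  exact Finset.single_le_sum (fun j _ => hA.eigenvalues_nonneg j) (Finset.mem_univ i)

end Matrix

namespace QIT

variable {d : Type} [Fintype d]

theorem IsState.nonempty {ρ : Matrix d d ℂ} (hρ : IsState ρ) : Nonempty d := by
  by_contra h
  rw [not_nonempty_iff] at h
  simpa [Matrix.trace] using hρ.2

theorem IsState.le_one [DecidableEq d] {ρ : Matrix d d ℂ} (hρ : IsState ρ) : ρ ≤ 1 := by
  refine CFC.le_one (R := ℝ) (fun x hx => ?_) hρ.1.isHermitian.isSelfAdjoint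
  obtain ⟨i, rfl⟩ := hρ.1.isHermitian.spectrum_real_eq_range_eigenvalues ▸ hx
  simpa [hρ.2] using hρ.1.eigenvalues_le_re_trace i

theorem IsState.smul_le [DecidableEq d] {ρ σ : Matrix d d ℂ} (hρ : IsState ρ) {r : ℝ}
    (hr : 0 ≤ r) (hσ : (r : ℂ) • (1 : Matrix d d ℂ) ≤ σ) : (r : ℂ) • ρ ≤ σ := by
  refine le_trans ?_ hσ
  rw [Matrix.le_iff, ← smul_sub]
  exact hρ.le_one.smul (by exact_mod_cast hr)

variable {X : Type} (M : X → Matrix d d ℂ)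

theorem mProb_nonneg {ρ : Matrix d d ℂ} (hρ : ρ.PosSemidef) {x : X} (hM : (M x).PosSemidef) :
    0 ≤ mProb M ρ x :=
  (Complex.nonneg_iff.mp (hρ.trace_mul_nonneg hM)).1

theorem mProb_mono {ρ σ : Matrix d d ℂ} (h : ρ ≤ σ) {x : X} (hM : (M x).PosSemidef) :
    mProb M ρ x ≤ mProb M σ x :=
  (Complex.le_def.mp (Matrix.trace_mul_le_trace_mul_of_le h hM)).1

theorem mProb_smul (r : ℝ) (ρ : Matrix d d ℂ) (x : X) :
    mProb M ((r : ℂ) • ρ) x = r * mProb M ρ x := by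
  simp [mProb, Matrix.trace_smul]

theorem sum_mProb [DecidableEq d] [Fintype X] {ρ : Matrix d d ℂ} (hρ : IsState ρ)
    (hM : IsPOVM M) : ∑ x, mProb M ρ x = 1 := by
  simp only [mProb, ← Complex.re_sum, ← Matrix.trace_sum, ← Matrix.mul_sum, hM.2,
    Matrix.mul_one, hρ.2, Complex.one_re]

end QIT

namespace Real

variable {p p' q t δ s : ℝ}

theorem log_div_le_neg_log (hp : 0 < p) (ht : 0 < t) (hpq : t * p ≤ q) :
    log (p / q) ≤ -log t := by
  have hq : 0 < q := (mul_pos ht hp).trans_le hpq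
  rw [← log_inv]
  exact log_le_log (div_pos hp hq) ((div_le_iff₀ hq).mpr (by field_simp; linarith))

theorem mul_log_div_le_sub (hp' : 0 ≤ p') (hp'p : p' ≤ p) : p' * log (p / p') ≤ p - p' := by
  rcases hp'.eq_or_lt with rfl | hp'0
  · simpa using hp'p
  calc p' * log (p / p') ≤ p' * (p / p' - 1) :=
        mul_le_mul_of_nonneg_left (log_le_sub_one_of_pos (div_pos (hp'0.trans_le hp'p) hp'0)) hp'
    _ = p - p' := by field_simp

theorem mul_log_div_sub_le_of_le (hp' : 0 ≤ p') (hp'p : p' ≤ p) (ht : 0 < t)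
    (hpq : t * p ≤ q) :
    p * log (p / q) - p' * log (p' / q) ≤ (p - p') * (1 - log t) := by
  rcases (hp'.trans hp'p).eq_or_lt with rfl | hp
  · simp [le_antisymm hp'p hp']
  have hq : 0 < q := (mul_pos ht hp).trans_le hpq
  have hsplit : p * log (p / q) - p' * log (p' / q) =
      (p - p') * log (p / q) + p' * log (p / p') := by
    rcases hp'.eq_or_lt with rfl | hp'0
    · simp
    rw [log_div hp.ne' hq.ne', log_div hp'0.ne' hq.ne', log_div hp.ne' hp'0.ne']
    ring
  have := mul_le_mul_of_nonneg_left (log_div_le_neg_log hp ht hpq) (sub_nonneg.mpr hp'p)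
  linarith [mul_log_div_le_sub hp' hp'p]

theorem mul_log_div_sub_le_of_lt (hp : 0 ≤ p) (hpp' : p < p') (hq : 0 < q) :
    p * log (p / q) - p' * log (p' / q) ≤ (p' - p) * log (q / (p' - p)) := by
  have hp' : 0 < p' := hp.trans_lt hpp'
  have hδ : 0 < p' - p := sub_pos.mpr hpp'
  have hsplit : p * log (p / q) - p' * log (p' / q) =
      (p' - p) * log (q / p') - p * log (p' / p) := by
    rcases hp.eq_or_lt with rfl | hp0
    · simp [log_div, hp'.ne', hq.ne']
      ring
    rw [log_div hp0.ne' hq.ne', log_div hp'.ne' hq.ne', log_div hq.ne' hp'.ne',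
      log_div hp'.ne' hp0.ne']
    ring
  have hmono : log (q / p') ≤ log (q / (p' - p)) :=
    log_le_log (by positivity) (div_le_div_of_nonneg_left hq.le hδ (by linarith))
  have hratio : 0 ≤ p * log (p' / p) := by
    rcases hp.eq_or_lt with rfl | hp0
    · simp
    exact mul_nonneg hp (log_nonneg ((one_le_div hp0).mpr hpp'.le))
  linarith [mul_le_mul_of_nonneg_left hmono hδ.le]

theorem mul_log_div_le (hδ : 0 < δ) (hq : 0 < q) (hs : 0 < s) :
    δ * log (q / δ) ≤ s * q - δ * (1 + log s) := by
  have hlog : log (q / δ) = log (s * q / δ) - log s := by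
    rw [log_div hq.ne' hδ.ne', log_div (by positivity) hδ.ne', log_mul hs.ne' hq.ne']
    ring
  have := log_le_sub_one_of_pos (show 0 < s * q / δ by positivity)
  calc δ * log (q / δ) ≤ δ * (s * q / δ - 1 - log s) := by
        rw [hlog]; exact mul_le_mul_of_nonneg_left (by linarith) hδ.le
    _ = s * q - δ * (1 + log s) := by field_simp; ring

theorem mul_log_div_sub_le (hp : 0 ≤ p) (hp' : 0 ≤ p') (ht : 0 < t) (hpq : t * p ≤ q)
    (hp'q : t * p' ≤ q) (hs : 0 < s) :
    p * log (p / q) - p' * log (p' / q) ≤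
      max (p - p') 0 * (1 - log t) - max (p' - p) 0 * (1 + log s) + s * q := by
  rcases le_or_gt p' p with hp'p | hpp'
  · rw [max_eq_left (sub_nonneg.mpr hp'p), max_eq_right (sub_nonpos.mpr hp'p)]
    have hq : 0 ≤ q := (mul_nonneg ht.le hp).trans hpq
    linarith [mul_log_div_sub_le_of_le hp' hp'p ht hpq, mul_nonneg hs.le hq]
  · rw [max_eq_right (sub_nonpos.mpr hpp'.le), max_eq_left (sub_nonneg.mpr hpp'.le)]
    have hq : 0 < q := (mul_pos ht (hp.trans_lt hpp')).trans_le hp'q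
    linarith [mul_log_div_sub_le_of_lt hp hpp' hq, mul_log_div_le (sub_pos.mpr hpp') hq hs]

end Real

open Real

section FiniteSums

variable {X : Type} [Fintype X] {P P' Q : X → ℝ} {t ε : ℝ}

theorem sum_max_sub_le (hdist : ∑ x, |P x - P' x| ≤ ε) : ∑ x, max (P x - P' x) 0 ≤ ε :=
  (Finset.sum_le_sum fun _ _ => max_le (le_abs_self _) (abs_nonneg _)).trans hdist

theorem sum_mul_log_div_sub_le (hP : ∀ x, 0 ≤ P x) (hP' : ∀ x, 0 ≤ P' x) (ht : 0 < t)
    (hPQ : ∀ x, t * P x ≤ Q x) (hP'Q : ∀ x, t * P' x ≤ Q x) (hQ : ∑ x, Q x ≤ 1)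
    (hdist : ∑ x, |P x - P' x| ≤ ε) (hε : 0 < ε) (hlogt : log t ≤ 1)
    (hlogε : log ε ≤ -1) :
    ∑ x, P x * log (P x / Q x) - ∑ x, P' x * log (P' x / Q x) ≤
      ε * (1 - log t - log ε) := by
  have hdist' : ∑ x, |P' x - P x| ≤ ε := by simpa only [abs_sub_comm] using hdist
  have hpos := mul_le_mul_of_nonneg_right (sum_max_sub_le hdist) (sub_nonneg.mpr hlogt)
  have hneg :=
    mul_le_mul_of_nonneg_right (sum_max_sub_le hdist') (by linarith : 0 ≤ -(1 + log ε))
  have hmass := mul_le_mul_of_nonneg_left hQ hε.le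
  calc ∑ x, P x * log (P x / Q x) - ∑ x, P' x * log (P' x / Q x)
      = ∑ x, (P x * log (P x / Q x) - P' x * log (P' x / Q x)) := (Finset.sum_sub_distrib ..).symm
    _ ≤ ∑ x, (max (P x - P' x) 0 * (1 - log t) - max (P' x - P x) 0 * (1 + log ε) +
          ε * Q x) :=
        Finset.sum_le_sum fun x _ =>
          mul_log_div_sub_le (hP x) (hP' x) ht (hPQ x) (hP'Q x) hε
    _ = (∑ x, max (P x - P' x) 0) * (1 - log t) - (∑ x, max (P' x - P x) 0) * (1 + log ε) +
          ε * ∑ x, Q x := by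
        rw [Finset.sum_add_distrib, Finset.sum_sub_distrib, Finset.sum_mul, Finset.sum_mul,
          Finset.mul_sum]
    _ ≤ ε * (1 - log t - log ε) := by linarith

end FiniteSums

namespace QIT

variable {X : Type} [Fintype X] {P P' Q : X → ℝ} {k ε : ℝ}

theorem klDiv2_eq_ofReal (h : ∀ x, Q x = 0 → P x = 0) :
    klDiv2 P Q = ENNReal.ofReal ((∑ x, P x * log (P x / Q x)) / log 2) := by
  rw [klDiv2, if_pos h, Finset.sum_div]
  simp_rw [Real.logb, mul_div_assoc]

theorem klDiv2_le_add_of_sum_abs_sub_le (hP : ∀ x, 0 ≤ P x) (hP' : ∀ x, 0 ≤ P' x)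
    (hk : 1 ≤ k) (hPQ : ∀ x, ε / k * P x ≤ Q x) (hP'Q : ∀ x, ε / k * P' x ≤ Q x)
    (hQ : ∑ x, Q x ≤ 1) (hdist : ∑ x, |P x - P' x| ≤ ε) (hε : ε ≤ (exp 1)⁻¹) :
    klDiv2 P Q ≤ klDiv2 P' Q + ENNReal.ofReal (2 * ε * logb 2 (3 * k / ε)) := by
  rcases ((Finset.sum_nonneg fun _ _ => abs_nonneg _).trans hdist).eq_or_lt with rfl | hε0
  · have hPP' : P = P' := funext fun x => sub_eq_zero.mp <| abs_eq_zero.mp <|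
      (Finset.sum_eq_zero_iff_of_nonneg fun _ _ => abs_nonneg _).mp
        (hdist.antisymm (Finset.sum_nonneg fun _ _ => abs_nonneg _)) x (Finset.mem_univ x)
    rw [hPP']
    exact le_self_add
  have hk0 : 0 < k := one_pos.trans_le hk
  have ht : 0 < ε / k := div_pos hε0 hk0
  have hsupp : ∀ {R : X → ℝ}, (∀ x, 0 ≤ R x) → (∀ x, ε / k * R x ≤ Q x) →
      ∀ x, Q x = 0 → R x = 0 := fun hR hRQ x hx =>
    le_antisymm (nonpos_of_mul_nonpos_right (hx ▸ hRQ x) ht) (hR x)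
  have hlogε : log ε ≤ -1 := by
    rw [← log_exp (-1), exp_neg]; exact log_le_log hε0 hε
  have hlogt : log (ε / k) ≤ 1 := by
    rw [log_div hε0.ne' hk0.ne']; linarith [log_nonneg hk]
  have hsum := sum_mul_log_div_sub_le hP hP' ht hPQ hP'Q hQ hdist hε0 hlogt hlogε
  have hbound : ε * (1 - log (ε / k) - log ε) ≤ 2 * ε * log (3 * k / ε) := by
    have hlog3 : 1 ≤ log 3 := by
      rw [le_log_iff_exp_le (by norm_num)]; linarith [exp_one_lt_d9]
    have := mul_nonneg hε0.le (by linarith [log_nonneg hk] : 0 ≤ 2 * log 3 - 1 + log k)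
    rw [log_div hε0.ne' hk0.ne', log_div (by positivity) hε0.ne', log_mul (by norm_num) hk0.ne']
    linarith
  rw [klDiv2_eq_ofReal (hsupp hP hPQ), klDiv2_eq_ofReal (hsupp hP' hP'Q)]
  refine (ENNReal.ofReal_le_ofReal ?_).trans ENNReal.ofReal_add_le
  rw [logb, ← mul_div_assoc, ← add_div]
  exact div_le_div_of_nonneg_right (by linarith) (log_nonneg one_le_two)

end QIT

/-- Continuity of the measured relative entropy against a state with smallest
eigenvalue at least ε/k. -/
theorem measured_relEnt_continuity {d : Type} [Fintype d] [DecidableEq d]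
    (ρ ρ' σ : Matrix d d ℂ) (hρ : IsState ρ) (hρ' : IsState ρ') (hσ : IsState σ)
    (ε : ℝ)
    (hσε : (σ - (((ε / (Fintype.card d : ℝ)) : ℝ) : ℂ) • (1 : Matrix d d ℂ)).PosSemidef)
    {m : ℕ} (M : Fin m → Matrix d d ℂ) (hM : IsPOVM M)
    (hdist : ∑ x, |mProb M ρ x - mProb M ρ' x| ≤ ε) (hε : ε ≤ (Real.exp 1)⁻¹) :
    klDiv2 (mProb M ρ) (mProb M σ) ≤ klDiv2 (mProb M ρ') (mProb M σ) +
        ENNReal.ofReal (2 * ε * Real.logb 2 (3 * (Fintype.card d : ℝ) / ε)) ∧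
    klDiv2 (mProb M ρ') (mProb M σ) ≤ klDiv2 (mProb M ρ) (mProb M σ) +
        ENNReal.ofReal (2 * ε * Real.logb 2 (3 * (Fintype.card d : ℝ) / ε)) := by
  have hε0 : 0 ≤ ε := (Finset.sum_nonneg fun _ _ => abs_nonneg _).trans hdist
  have hk : 1 ≤ (Fintype.card d : ℝ) := by
    have := hρ.nonempty
    exact_mod_cast Fintype.card_pos
  have hQ : ∑ x, mProb M σ x ≤ 1 := (sum_mProb M hσ hM).le
  have hPQ : ∀ {τ}, IsState τ → ∀ x, ε / Fintype.card d * mProb M τ x ≤ mProb M σ x :=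
    fun hτ x => mProb_smul M _ _ x ▸
      mProb_mono M (hτ.smul_le (by positivity) (Matrix.le_iff.mpr hσε)) (hM.1 x)
  have hP : ∀ {τ}, IsState τ → ∀ x, 0 ≤ mProb M τ x :=
    fun hτ x => mProb_nonneg M hτ.1 (hM.1 x)
  exact ⟨klDiv2_le_add_of_sum_abs_sub_le (hP hρ) (hP hρ') hk (hPQ hρ) (hPQ hρ') hQ hdist hε,
    klDiv2_le_add_of_sum_abs_sub_le (hP hρ') (hP hρ) hk (hPQ hρ') (hPQ hρ) hQ
      (by simpa only [abs_sub_comm] using hdist) hε⟩
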